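/- With χ and f as in the construction, if the group I_{χ,f} is non-abelian then its center equals {(z, 1) : z ∈ ker(f) ∩ ker(χ)}. -/

import Mathlib

/-! Write `⟨x⟩` for the map `z ↦ x + z - χ(x) f(z)`. Since `f² = 0`, the composite `⟨w⟩ ∘ ⟨x⟩` is
`z ↦ (w + x - χ(w) f(x)) + z - (χ(w) + χ(x)) f(z)`, so `⟨w⟩` and `⟨x⟩` commute exactly when
`χ(w) f(x) = χ(x) f(w)`. If `⟨w⟩` is central and `χ(w) ≠ 0`, this forces `f(x) ∈ F f(w)` with
coefficient `χ(x)/χ(w)` for every `x`, which makes the whole group abelian. Hence a central `⟨w⟩`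
has `χ(w) = 0`, and then `χ(x) f(w) = 0` for an `x` with `χ(x) ≠ 0` gives `f(w) = 0`. -/

section ShearMap

variable {F V : Type*} [AddCommGroup V]

section Ring

variable [Ring F] [Module F V]

def shearMap (χ : V →+ F) (f : V →ₗ[F] V) (x z : V) : V :=
  x + (z - χ x • f z)

variable {χ : V →+ F} {f : V →ₗ[F] V}

theorem shearMap_comp (hff : ∀ z, f (f z) = 0) (w x : V) :
    shearMap χ f w ∘ shearMap χ f x = fun z => (w + x - χ w • f x) + (z - (χ w + χ x) • f z) := by
  funext z
  simp only [shearMap, Function.comp, map_add, map_sub, map_smul, hff, smul_zero, sub_zero,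
    smul_add, add_smul]
  abel

theorem shearMap_commute_iff (hff : ∀ z, f (f z) = 0) (w x : V) :
    shearMap χ f w ∘ shearMap χ f x = shearMap χ f x ∘ shearMap χ f w ↔
      χ w • f x = χ x • f w := by
  rw [shearMap_comp hff, shearMap_comp hff, add_comm (χ x), add_comm x]
  constructor
  · intro h
    simpa using congrFun h 0
  · intro h
    rw [h]

end Ring

variable [Field F] [Module F V] {χ : V →+ F} {f : V →ₗ[F] V}

theorem smul_apply_symm_of_forall {w : V} (hw : χ w ≠ 0) (hcomm : ∀ x, χ w • f x = χ x • f w)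
    (x y : V) :
    χ x • f y = χ y • f x := by
  have hf : ∀ x, f x = (χ x * (χ w)⁻¹) • f w := fun x => by
    rw [mul_comm, ← smul_smul, ← hcomm x, smul_smul, inv_mul_cancel₀ hw, one_smul]
  rw [hf x, hf y, smul_smul, smul_smul, mul_left_comm]

theorem forall_smul_apply_symm_iff (hχ : χ ≠ 0) (hnonab : ∃ x y, χ x • f y ≠ χ y • f x) (w : V) :
    (∀ x, χ w • f x = χ x • f w) ↔ f w = 0 ∧ χ w = 0 := by
  constructor
  · intro hcomm
    have hχw : χ w = 0 := by
      by_contra hw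
      obtain ⟨x, y, hxy⟩ := hnonab
      exact hxy (smul_apply_symm_of_forall hw hcomm x y)
    obtain ⟨x, hx⟩ : ∃ x, χ x ≠ 0 := by
      by_contra! h
      exact hχ (AddMonoidHom.ext h)
    have hfw := hcomm x
    rw [hχw, zero_smul, eq_comm, smul_eq_zero] at hfw
    exact ⟨hfw.resolve_left hx, hχw⟩
  · rintro ⟨hfw, hχw⟩ x
    rw [hfw, hχw, smul_zero, zero_smul]

end ShearMap

theorem stmt8_general
    (F K : Type*) [Field F] [Field K] [Algebra F K]
    (f : K →ₗ[F] K) (hf2 : f ∘ₗ f = 0)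
    (χ : K →+ F) (hχ : χ ≠ 0)
    (hnonab : ¬ ∀ x y : K,
        (fun z : K => x + (z - χ x • f z)) ∘ (fun z : K => y + (z - χ y • f z)) =
          (fun z : K => y + (z - χ y • f z)) ∘ (fun z : K => x + (z - χ x • f z))) :
    ∀ w : K,
      (∀ x : K,
        (fun z : K => w + (z - χ w • f z)) ∘ (fun z : K => x + (z - χ x • f z)) =
          (fun z : K => x + (z - χ x • f z)) ∘ (fun z : K => w + (z - χ w • f z))) ↔
      (f w = 0 ∧ χ w = 0) := by
  have hff : ∀ z, f (f z) = 0 := fun z => by simpa using LinearMap.congr_fun hf2 z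
  have hcomm := shearMap_commute_iff (χ := χ) hff
  unfold shearMap at hcomm
  simp only [hcomm] at hnonab ⊢
  push Not at hnonab
  exact forall_smul_apply_symm_iff hχ hnonab

/-- If the group `I_{χ,f}` (realized as the group of permutations
`z ↦ x + z - χ(x)·f(z)` of `K`) is non-abelian, then its center is
`{(z, 1) : z ∈ ker f ∩ ker χ}`; i.e. the element determined by `z` is central if and
only if `f z = 0` and `χ z = 0` (in which case `1 - χ(z)f = 1`). -/
theorem stmt8 (p m a : ℕ) (hp : p.Prime) (ham : a ∣ m)
    (F K : Type*) [Field F] [Field K] [Algebra F K] [Fintype F] [Fintype K]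
    (hF : Fintype.card F = p ^ a) (hK : Fintype.card K = p ^ m)
    (f : K →ₗ[F] K) (hf : f ≠ 0) (hf2 : f ∘ₗ f = 0)
    (χ : K →+ F) (hχ : χ ≠ 0) (hχf : ∀ x : K, χ (f x) = 0)
    (hnonab : ¬ ∀ x y : K,
        (fun z : K => x + (z - χ x • f z)) ∘ (fun z : K => y + (z - χ y • f z)) =
          (fun z : K => y + (z - χ y • f z)) ∘ (fun z : K => x + (z - χ x • f z))) :
    ∀ w : K,
      (∀ x : K,
        (fun z : K => w + (z - χ w • f z)) ∘ (fun z : K => x + (z - χ x • f z)) =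
          (fun z : K => x + (z - χ x • f z)) ∘ (fun z : K => w + (z - χ w • f z))) ↔
      (f w = 0 ∧ χ w = 0) :=
  stmt8_general F K f hf2 χ hχ hnonab
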